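/- The difference of expected mixed (ρ, β) second derivatives of the noisy- and true-data least squares objectives at the true parameter is the explicit vector: E[∂²L*_LS/∂ρ∂β (γ0)] − E[∂²L_LS/∂ρ∂β (γ0)] = (0_{p1}ᵀ, 4λx² tr(S0 d0 ḋ0 S0ᵀ) β02ᵀ − 4λx² tr(W d0² S0ᵀ) β02ᵀ)ᵀ ∈ ℝ^p. -/

import Mathlib

open MeasureTheory ProbabilityTheory Matrix
open scoped Matrix

namespace PSAR

/-- `S(ρ) = I_N − ρ W`. -/
noncomputable def Smat {N : ℕ} (W : Matrix (Fin N) (Fin N) ℝ) (ρ : ℝ) :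
    Matrix (Fin N) (Fin N) ℝ :=
  1 - ρ • W

/-- `Ω(ρ, σ²) = σ² I_N + λ² S(ρ) S(ρ)ᵀ`. -/
noncomputable def Omat {N : ℕ} (W : Matrix (Fin N) (Fin N) ℝ) (lam2 ρ σ2 : ℝ) :
    Matrix (Fin N) (Fin N) ℝ :=
  σ2 • (1 : Matrix (Fin N) (Fin N) ℝ) + lam2 • (Smat W ρ * (Smat W ρ)ᵀ)

/-- `𝕎S(ρ) = W S(ρ)ᵀ + S(ρ) Wᵀ`. -/
noncomputable def WSmat {N : ℕ} (W : Matrix (Fin N) (Fin N) ℝ) (ρ : ℝ) :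
    Matrix (Fin N) (Fin N) ℝ :=
  W * (Smat W ρ)ᵀ + Smat W ρ * Wᵀ

/-- `𝕎(ρ) = Wᵀ S(ρ) + S(ρ)ᵀ W` (least squares version). -/
noncomputable def WLSmat {N : ℕ} (W : Matrix (Fin N) (Fin N) ℝ) (ρ : ℝ) :
    Matrix (Fin N) (Fin N) ℝ :=
  Wᵀ * Smat W ρ + (Smat W ρ)ᵀ * W

/-- The negative log-likelihood
`L(θ) = −log det S(ρ) + (1/2) log det Ω(ρ,σ²) + (1/2)(S(ρ)Ys − Xβ)ᵀ Ω(ρ,σ²)⁻¹ (S(ρ)Ys − Xβ)`. -/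
noncomputable def nll {N p1 p2 : ℕ} (W : Matrix (Fin N) (Fin N) ℝ) (lam2 : ℝ)
    (X : Matrix (Fin N) (Fin p1 ⊕ Fin p2) ℝ) (Ys : Fin N → ℝ)
    (ρ : ℝ) (β : Fin p1 ⊕ Fin p2 → ℝ) (σ2 : ℝ) : ℝ :=
  - Real.log (Smat W ρ).det + (1 / 2) * Real.log (Omat W lam2 ρ σ2).det
    + (1 / 2) * ((Smat W ρ *ᵥ Ys - X *ᵥ β) ⬝ᵥ
        ((Omat W lam2 ρ σ2)⁻¹ *ᵥ (Smat W ρ *ᵥ Ys - X *ᵥ β)))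

/-- Diagonal matrix `d(ρ)` with `d(ρ)_{ii} = 1/(S(ρ)ᵀ S(ρ))_{ii}`. -/
noncomputable def dmat {N : ℕ} (W : Matrix (Fin N) (Fin N) ℝ) (ρ : ℝ) :
    Matrix (Fin N) (Fin N) ℝ :=
  Matrix.diagonal fun i => ((((Smat W ρ)ᵀ * Smat W ρ) i i)⁻¹)

/-- Entrywise first derivative `ḋ(ρ)` of `d(ρ)` in `ρ`. -/
noncomputable def dmatDot {N : ℕ} (W : Matrix (Fin N) (Fin N) ℝ) (ρ : ℝ) :
    Matrix (Fin N) (Fin N) ℝ :=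
  Matrix.diagonal fun i => deriv (fun r => ((((Smat W r)ᵀ * Smat W r) i i)⁻¹)) ρ

/-- Entrywise second derivative `d̈(ρ)` of `d(ρ)` in `ρ`. -/
noncomputable def dmatDDot {N : ℕ} (W : Matrix (Fin N) (Fin N) ℝ) (ρ : ℝ) :
    Matrix (Fin N) (Fin N) ℝ :=
  Matrix.diagonal fun i => deriv (deriv (fun r => ((((Smat W r)ᵀ * Smat W r) i i)⁻¹))) ρ

/-- Least squares objective `L_LS(γ) = ‖d(ρ) S(ρ)ᵀ (S(ρ)Y − Xβ)‖²`. -/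
noncomputable def lsObj {N p1 p2 : ℕ} (W : Matrix (Fin N) (Fin N) ℝ)
    (X : Matrix (Fin N) (Fin p1 ⊕ Fin p2) ℝ) (Y : Fin N → ℝ)
    (ρ : ℝ) (β : Fin p1 ⊕ Fin p2 → ℝ) : ℝ :=
  ((dmat W ρ * (Smat W ρ)ᵀ) *ᵥ (Smat W ρ *ᵥ Y - X *ᵥ β)) ⬝ᵥ
    ((dmat W ρ * (Smat W ρ)ᵀ) *ᵥ (Smat W ρ *ᵥ Y - X *ᵥ β))

/-- Observed response `Y* = S0⁻¹(Xβ0 + E) + ε`. -/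
noncomputable def Yobs {N p1 p2 : ℕ} (W : Matrix (Fin N) (Fin N) ℝ) (ρ0 : ℝ)
    (X : Matrix (Fin N) (Fin p1 ⊕ Fin p2) ℝ) (β0 : Fin p1 ⊕ Fin p2 → ℝ)
    (E ε : Fin N → ℝ) : Fin N → ℝ :=
  (Smat W ρ0)⁻¹ *ᵥ (X *ᵥ β0 + E) + ε

/-- True response `Y = S0⁻¹(Xβ0 + E)`. -/
noncomputable def Ytrue {N p1 p2 : ℕ} (W : Matrix (Fin N) (Fin N) ℝ) (ρ0 : ℝ)
    (X : Matrix (Fin N) (Fin p1 ⊕ Fin p2) ℝ) (β0 : Fin p1 ⊕ Fin p2 → ℝ)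
    (E : Fin N → ℝ) : Fin N → ℝ :=
  (Smat W ρ0)⁻¹ *ᵥ (X *ᵥ β0 + E)

/-- Observed covariates `X* = (X1, X2 + Ex)`. -/
noncomputable def Xobs {N p1 p2 : ℕ} (X : Matrix (Fin N) (Fin p1 ⊕ Fin p2) ℝ)
    (Ex : Fin N → Fin p2 → ℝ) : Matrix (Fin N) (Fin p1 ⊕ Fin p2) ℝ :=
  X + Matrix.of fun i j => Sum.elim (fun _ => (0 : ℝ)) (fun k => Ex i k) j

/-- All the noise entries of `E`, `ε`, `Ex` gathered as a single family. -/
def noiseFam {Ωs : Type*} {N p2 : ℕ} (E ε : Ωs → Fin N → ℝ)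
    (Ex : Ωs → Fin N → Fin p2 → ℝ) :
    (Fin N ⊕ Fin N ⊕ Fin N × Fin p2) → Ωs → ℝ :=
  fun z ω => Sum.elim (fun i => E ω i) (Sum.elim (fun i => ε ω i) (fun q => Ex ω q.1 q.2)) z

/-
At `γ₀` the mixed derivative of `L_LS` is `-2` times a form (`mixedDerivForm`) that is bilinear
in the pair (residual `S₀Y - Xβ₀`, response `Y`) and the direction `X e_j`. For both data sets
these vectors are affine in the joint noise vector `ζ = (E, ε, Ex)`, whose coordinates are centred
and pairwise orthogonal in `L²`, so the expectation of each product is its deterministic part plus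
`∑_z (Bᵀ C)_zz Var ζ_z`. The deterministic parts agree for the two data sets, and for the true data
the direction carries no noise, so nothing else survives. For the noisy data the direction picks
up `Ex e_j`, which meets only the `-Ex β₀₂` part of the residual; this adds
`-2 λx² ⟨β₀₂, e_j⟩ tr(Aᵀ Ȧ)` to the form, with `A = d₀ S₀ᵀ` and `Ȧ = ḋ₀ S₀ᵀ - d₀ Wᵀ`.
-/

section Derivatives

variable {n : Type*} [Fintype n]

/-- The derivative of `ρ ↦ ⟨A(ρ) r(ρ), A(ρ) u⟩` when `A' = Ad` and `r' = -W y`. -/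
def mixedDerivForm (A Ad W : Matrix n n ℝ) (r y u : n → ℝ) : ℝ :=
  (Ad *ᵥ r - A *ᵥ (W *ᵥ y)) ⬝ᵥ (A *ᵥ u) + (A *ᵥ r) ⬝ᵥ (Ad *ᵥ u)

lemma hasDerivAt_dotProduct {f g : ℝ → n → ℝ} {f' g' : n → ℝ} {x : ℝ}
    (hf : ∀ i, HasDerivAt (fun t => f t i) (f' i) x)
    (hg : ∀ i, HasDerivAt (fun t => g t i) (g' i) x) :
    HasDerivAt (fun t => f t ⬝ᵥ g t) (f' ⬝ᵥ g x + f x ⬝ᵥ g') x := by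
  simp only [dotProduct, ← Finset.sum_add_distrib]
  exact HasDerivAt.fun_sum fun i _ => (hf i).mul (hg i)

lemma hasDerivAt_mulVec_apply {m : Type*} {M : ℝ → Matrix m n ℝ} {v : ℝ → n → ℝ}
    {M' : Matrix m n ℝ} {v' : n → ℝ} {x : ℝ} (i : m)
    (hM : ∀ k, HasDerivAt (fun t => M t i k) (M' i k) x)
    (hv : ∀ k, HasDerivAt (fun t => v t k) (v' k) x) :
    HasDerivAt (fun t => (M t *ᵥ v t) i) ((M' *ᵥ v x + M x *ᵥ v') i) x :=
  hasDerivAt_dotProduct hM hv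

variable {N p1 p2 : ℕ} (W : Matrix (Fin N) (Fin N) ℝ)

lemma hasDerivAt_Smat_apply (ρ : ℝ) (i k : Fin N) :
    HasDerivAt (fun r => Smat W r i k) ((-W) i k) ρ := by
  simpa [Smat] using ((hasDerivAt_id ρ).mul_const (W i k)).const_sub
    ((1 : Matrix (Fin N) (Fin N) ℝ) i k)

lemma transpose_Smat_mul_Smat_diag (hW : ∀ i, W i i = 0) (ρ : ℝ) (i : Fin N) :
    ((Smat W ρ)ᵀ * Smat W ρ) i i = 1 + ρ ^ 2 * ∑ k, W k i ^ 2 := by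
  have hterm : ∀ k, (Smat W ρ)ᵀ i k * Smat W ρ k i
      = (if k = i then 1 else 0) + ρ ^ 2 * W k i ^ 2 := by
    intro k
    by_cases hk : k = i
    · subst hk; simp [Smat, hW k]
    · simp [Smat, hk]; ring
  rw [Matrix.mul_apply]
  simp only [hterm]
  simp [Finset.sum_add_distrib, Finset.mul_sum]

lemma hasDerivAt_dmat_diag (hW : ∀ i, W i i = 0) (ρ : ℝ) (i : Fin N) :
    HasDerivAt (fun r => dmat W r i i) (dmatDot W ρ i i) ρ := by
  simp only [dmat, dmatDot, Matrix.diagonal_apply_eq]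
  apply DifferentiableAt.hasDerivAt
  simp only [transpose_Smat_mul_Smat_diag W hW]
  have hpos : 0 < 1 + ρ ^ 2 * ∑ k, W k i ^ 2 := by positivity
  exact (((differentiableAt_id.pow 2).mul_const _).const_add 1).inv hpos.ne'

noncomputable def Amat (ρ : ℝ) : Matrix (Fin N) (Fin N) ℝ :=
  dmat W ρ * (Smat W ρ)ᵀ

noncomputable def Adot (ρ : ℝ) : Matrix (Fin N) (Fin N) ℝ :=
  dmatDot W ρ * (Smat W ρ)ᵀ - dmat W ρ * Wᵀ

lemma hasDerivAt_Amat_apply (hW : ∀ i, W i i = 0) (ρ : ℝ) (i k : Fin N) :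
    HasDerivAt (fun r => Amat W r i k) (Adot W ρ i k) ρ := by
  have hA : ∀ r, Amat W r i k = dmat W r i i * Smat W r k i := fun r => by
    simp [Amat, dmat]
  have hAd : Adot W ρ i k = dmatDot W ρ i i * Smat W ρ k i + dmat W ρ i i * (-W) k i := by
    simp [Adot, dmat, dmatDot]; ring
  simp only [hA, hAd]
  exact (hasDerivAt_dmat_diag W hW ρ i).mul (hasDerivAt_Smat_apply W ρ k i)

lemma deriv_lsObj_line (X' : Matrix (Fin N) (Fin p1 ⊕ Fin p2) ℝ) (Y' : Fin N → ℝ) (ρ : ℝ)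
    (β w : Fin p1 ⊕ Fin p2 → ℝ) :
    deriv (fun t : ℝ => lsObj W X' Y' ρ (β + t • w)) 0
      = -2 * ((Amat W ρ *ᵥ (Smat W ρ *ᵥ Y' - X' *ᵥ β)) ⬝ᵥ (Amat W ρ *ᵥ (X' *ᵥ w))) := by
  set a := Amat W ρ *ᵥ (Smat W ρ *ᵥ Y' - X' *ᵥ β)
  set b := Amat W ρ *ᵥ (X' *ᵥ w)
  have hline : ∀ t : ℝ, lsObj W X' Y' ρ (β + t • w) = (a - t • b) ⬝ᵥ (a - t • b) := fun t => by
    simp only [lsObj, a, b, Amat, Matrix.mulVec_add, Matrix.mulVec_smul, Matrix.mulVec_sub,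
      sub_add_eq_sub_sub]
  have hcoord : ∀ i, HasDerivAt (fun t : ℝ => (a - t • b) i) ((-b) i) 0 := fun i => by
    simpa using ((hasDerivAt_id (0 : ℝ)).mul_const (b i)).const_sub (a i)
  simp only [hline, (hasDerivAt_dotProduct hcoord hcoord).deriv]
  simp only [zero_smul, sub_zero, neg_dotProduct, dotProduct_neg, dotProduct_comm b a]
  ring

lemma deriv_deriv_lsObj (hW : ∀ i, W i i = 0) (X' : Matrix (Fin N) (Fin p1 ⊕ Fin p2) ℝ)
    (Y' : Fin N → ℝ) (ρ : ℝ) (β w : Fin p1 ⊕ Fin p2 → ℝ) :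
    deriv (fun r => deriv (fun t : ℝ => lsObj W X' Y' r (β + t • w)) 0) ρ
      = -2 * mixedDerivForm (Amat W ρ) (Adot W ρ) W (Smat W ρ *ᵥ Y' - X' *ᵥ β) Y' (X' *ᵥ w) := by
  have hconst : ∀ v : Fin N → ℝ, ∀ k, HasDerivAt (fun _ : ℝ => v k) ((0 : Fin N → ℝ) k) ρ :=
    fun v k => hasDerivAt_const ρ (v k)
  have hresid : ∀ k, HasDerivAt (fun r => (Smat W r *ᵥ Y' - X' *ᵥ β) k) ((-(W *ᵥ Y')) k) ρ :=
    fun k => by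
      simpa [Matrix.neg_mulVec] using (hasDerivAt_mulVec_apply k (hasDerivAt_Smat_apply W ρ k)
        (hconst Y')).sub_const ((X' *ᵥ β) k)
  have hAr := fun i => hasDerivAt_mulVec_apply i (hasDerivAt_Amat_apply W hW ρ i) hresid
  have hAu := fun i => hasDerivAt_mulVec_apply i (hasDerivAt_Amat_apply W hW ρ i) (hconst (X' *ᵥ w))
  simp only [deriv_lsObj_line, ((hasDerivAt_dotProduct hAr hAu).const_mul (-2)).deriv]
  simp [mixedDerivForm, Matrix.mulVec_neg, sub_eq_add_neg]

end Derivatives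

section Moments

variable {Ω ι n : Type*} [MeasurableSpace Ω] {μ : Measure Ω} [Fintype ι] [Fintype n]
  {ζ : Ω → ι → ℝ}

lemma integrable_dotProduct (hint : ∀ z, Integrable (fun ω => ζ ω z) μ) (c : ι → ℝ) :
    Integrable (fun ω => c ⬝ᵥ ζ ω) μ :=
  integrable_finsetSum _ fun z _ => (hint z).const_mul (c z)

lemma integral_dotProduct_eq_zero (hint : ∀ z, Integrable (fun ω => ζ ω z) μ)
    (hmean : ∀ z, ∫ ω, ζ ω z ∂μ = 0) (c : ι → ℝ) :
    ∫ ω, c ⬝ᵥ ζ ω ∂μ = 0 := by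
  simp only [dotProduct]
  rw [integral_finsetSum _ fun z _ => (hint z).const_mul (c z)]
  simp [integral_const_mul, hmean]

lemma integrable_quadForm (hL2 : ∀ z, MemLp (fun ω => ζ ω z) 2 μ) (G : Matrix ι ι ℝ) :
    Integrable (fun ω => ζ ω ⬝ᵥ (G *ᵥ ζ ω)) μ := by
  simp only [dotProduct, mulVec, Finset.mul_sum]
  exact integrable_finsetSum _ fun z _ => integrable_finsetSum _ fun z' _ =>
    (((hL2 z).integrable_mul (hL2 z')).const_mul (G z z')).congr
      (.of_forall fun ω => by simp only [Pi.mul_apply]; ring)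

lemma integral_quadForm (hL2 : ∀ z, MemLp (fun ω => ζ ω z) 2 μ)
    (horth : Pairwise fun z z' => ∫ ω, ζ ω z * ζ ω z' ∂μ = 0) (G : Matrix ι ι ℝ) :
    ∫ ω, ζ ω ⬝ᵥ (G *ᵥ ζ ω) ∂μ = ∑ z, G z z * ∫ ω, ζ ω z ^ 2 ∂μ := by
  have hint : ∀ z z', Integrable (fun ω => G z z' * (ζ ω z * ζ ω z')) μ :=
    fun z z' => ((hL2 z).integrable_mul (hL2 z')).const_mul (G z z')
  calc ∫ ω, ζ ω ⬝ᵥ (G *ᵥ ζ ω) ∂μ = ∫ ω, ∑ z, ∑ z', G z z' * (ζ ω z * ζ ω z') ∂μ := by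
        congr 1; funext ω
        simp only [dotProduct, mulVec, Finset.mul_sum]
        exact Finset.sum_congr rfl fun z _ => Finset.sum_congr rfl fun z' _ => by ring
    _ = ∑ z, G z z * ∫ ω, ζ ω z ^ 2 ∂μ := by
        rw [integral_finsetSum _ fun z _ => integrable_finsetSum _ fun z' _ => hint z z']
        refine Finset.sum_congr rfl fun z _ => ?_
        rw [integral_finsetSum _ fun z' _ => hint z z', Finset.sum_eq_single z
          (fun z' _ h => by rw [integral_const_mul, horth h.symm, mul_zero]) (by simp),
          integral_const_mul]
        simp only [sq]

lemma affine_dotProduct_eq (a g : n → ℝ) (B C : Matrix n ι ℝ) (v : ι → ℝ) :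
    (a + B *ᵥ v) ⬝ᵥ (g + C *ᵥ v) = a ⬝ᵥ g + (a ᵥ* C + g ᵥ* B) ⬝ᵥ v + v ⬝ᵥ ((Bᵀ * C) *ᵥ v) := by
  rw [add_dotProduct (a ᵥ* C), ← dotProduct_mulVec, ← dotProduct_mulVec, dotProduct_comm g,
    ← mulVec_mulVec, dotProduct_mulVec v, vecMul_transpose, add_dotProduct, dotProduct_add,
    dotProduct_add]
  ring

variable [IsProbabilityMeasure μ]

lemma integrable_affine_dotProduct (hL2 : ∀ z, MemLp (fun ω => ζ ω z) 2 μ) (a g : n → ℝ)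
    (B C : Matrix n ι ℝ) :
    Integrable (fun ω => (a + B *ᵥ ζ ω) ⬝ᵥ (g + C *ᵥ ζ ω)) μ := by
  simp only [affine_dotProduct_eq]
  exact ((integrable_const _).fun_add
    (integrable_dotProduct (fun z => (hL2 z).integrable one_le_two) _)).fun_add
    (integrable_quadForm hL2 _)

lemma integral_affine_dotProduct (hL2 : ∀ z, MemLp (fun ω => ζ ω z) 2 μ)
    (hmean : ∀ z, ∫ ω, ζ ω z ∂μ = 0)
    (horth : Pairwise fun z z' => ∫ ω, ζ ω z * ζ ω z' ∂μ = 0) (a g : n → ℝ)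
    (B C : Matrix n ι ℝ) :
    ∫ ω, (a + B *ᵥ ζ ω) ⬝ᵥ (g + C *ᵥ ζ ω) ∂μ
      = a ⬝ᵥ g + ∑ z, (Bᵀ * C) z z * ∫ ω, ζ ω z ^ 2 ∂μ := by
  have hint : ∀ z, Integrable (fun ω => ζ ω z) μ := fun z => (hL2 z).integrable one_le_two
  simp only [affine_dotProduct_eq]
  rw [integral_add ((integrable_const _).fun_add (integrable_dotProduct hint _))
      (integrable_quadForm hL2 _), integral_add (integrable_const _) (integrable_dotProduct hint _),
    integral_const, integral_dotProduct_eq_zero hint hmean, integral_quadForm hL2 horth]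
  simp

lemma integral_mixedDerivForm (hL2 : ∀ z, MemLp (fun ω => ζ ω z) 2 μ)
    (hmean : ∀ z, ∫ ω, ζ ω z ∂μ = 0)
    (horth : Pairwise fun z z' => ∫ ω, ζ ω z * ζ ω z' ∂μ = 0) (A Ad W : Matrix n n ℝ)
    (R Ym U : Matrix n ι ℝ) (y₀ u₀ : n → ℝ) :
    ∫ ω, mixedDerivForm A Ad W (R *ᵥ ζ ω) (y₀ + Ym *ᵥ ζ ω) (u₀ + U *ᵥ ζ ω) ∂μ
      = mixedDerivForm A Ad W 0 y₀ u₀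
        + ∑ z, (((Ad * R - A * W * Ym)ᵀ * A + (A * R)ᵀ * Ad) * U) z z * ∫ ω, ζ ω z ^ 2 ∂μ := by
  have hsplit : ∀ v : ι → ℝ, mixedDerivForm A Ad W (R *ᵥ v) (y₀ + Ym *ᵥ v) (u₀ + U *ᵥ v)
      = (-(A *ᵥ (W *ᵥ y₀)) + (Ad * R - A * W * Ym) *ᵥ v) ⬝ᵥ (A *ᵥ u₀ + (A * U) *ᵥ v)
        + (0 + (A * R) *ᵥ v) ⬝ᵥ (Ad *ᵥ u₀ + (Ad * U) *ᵥ v) := fun v => by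
    simp only [mixedDerivForm, mulVec_add, ← mulVec_mulVec, sub_mulVec, zero_add]
    abel_nf
  simp only [hsplit]
  rw [integral_add (integrable_affine_dotProduct hL2 _ _ _ _)
      (integrable_affine_dotProduct hL2 _ _ _ _),
    integral_affine_dotProduct hL2 hmean horth, integral_affine_dotProduct hL2 hmean horth,
    add_add_add_comm, ← Finset.sum_add_distrib]
  congr 1
  · simp [mixedDerivForm]
  · refine Finset.sum_congr rfl fun z _ => ?_
    simp only [Matrix.add_mul, Matrix.mul_assoc, Matrix.add_apply]
    ring

end Moments

section Noise

variable {N p1 p2 : ℕ} {l : Type*}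

abbrev NoiseIdx (N p2 : ℕ) := Fin N ⊕ Fin N ⊕ Fin N × Fin p2

/-- `noiseFam E ε Ex · ω` is definitionally `noiseVec (E ω) (ε ω) (Ex ω)`. -/
def noiseVec (e ε' : Fin N → ℝ) (ex : Fin N → Fin p2 → ℝ) : NoiseIdx N p2 → ℝ :=
  Sum.elim e (Sum.elim ε' fun q => ex q.1 q.2)

def embE (N p2 : ℕ) : Matrix (Fin N) (NoiseIdx N p2) ℝ :=
  of fun a z => if z = Sum.inl a then 1 else 0

def embEps (N p2 : ℕ) : Matrix (Fin N) (NoiseIdx N p2) ℝ :=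
  of fun a z => if z = Sum.inr (Sum.inl a) then 1 else 0

def embEx (N : ℕ) {p2 : ℕ} (v : Fin p2 → ℝ) : Matrix (Fin N) (NoiseIdx N p2) ℝ :=
  of fun a z => Sum.elim 0 (Sum.elim 0 fun q => if q.1 = a then v q.2 else 0) z

lemma embE_mulVec_noiseVec (e ε' : Fin N → ℝ) (ex : Fin N → Fin p2 → ℝ) :
    embE N p2 *ᵥ noiseVec e ε' ex = e := by
  funext a; simp [embE, noiseVec, mulVec, dotProduct, ite_mul]

lemma embEps_mulVec_noiseVec (e ε' : Fin N → ℝ) (ex : Fin N → Fin p2 → ℝ) :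
    embEps N p2 *ᵥ noiseVec e ε' ex = ε' := by
  funext a; simp [embEps, noiseVec, mulVec, dotProduct, ite_mul]

lemma embEx_mulVec_noiseVec (v : Fin p2 → ℝ) (e ε' : Fin N → ℝ) (ex : Fin N → Fin p2 → ℝ) :
    embEx N v *ᵥ noiseVec e ε' ex = of ex *ᵥ v := by
  funext a
  simp [embEx, noiseVec, mulVec, dotProduct, Fintype.sum_prod_type, mul_comm]

lemma Xobs_mulVec (X : Matrix (Fin N) (Fin p1 ⊕ Fin p2) ℝ) (ex : Fin N → Fin p2 → ℝ)
    (w : Fin p1 ⊕ Fin p2 → ℝ) :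
    Xobs X ex *ᵥ w = X *ᵥ w + of ex *ᵥ (w ∘ Sum.inr) := by
  rw [Xobs, add_mulVec]
  congr 1
  funext a
  simp [mulVec, dotProduct, mul_comm]

lemma mul_embE_apply_inr_inr (M : Matrix l (Fin N) ℝ) (i : l) (q : Fin N × Fin p2) :
    (M * embE N p2) i (Sum.inr (Sum.inr q)) = 0 := by
  simp [embE, mul_apply]

lemma mul_embEps_apply_inr_inr (M : Matrix l (Fin N) ℝ) (i : l) (q : Fin N × Fin p2) :
    (M * embEps N p2) i (Sum.inr (Sum.inr q)) = 0 := by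
  simp [embEps, mul_apply]

lemma mul_embEx_apply_inr_inr (M : Matrix l (Fin N) ℝ) (v : Fin p2 → ℝ) (i : l) (b : Fin N)
    (m : Fin p2) : (M * embEx N v) i (Sum.inr (Sum.inr (b, m))) = M i b * v m := by
  simp [embEx, mul_apply]

lemma sum_diag_mul_embEx (K : Matrix (NoiseIdx N p2) (Fin N) ℝ) (v : Fin p2 → ℝ)
    (s : NoiseIdx N p2 → ℝ) :
    ∑ z, (K * embEx N v) z z * s z
      = ∑ b, ∑ m, K (Sum.inr (Sum.inr (b, m))) b * v m * s (Sum.inr (Sum.inr (b, m))) := by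
  simp [Fintype.sum_sum_type, Fintype.sum_prod_type, embEx, mul_apply]

lemma sum_diag_mul_embEx_obs (A Ad W S T : Matrix (Fin N) (Fin N) ℝ) (β v : Fin p2 → ℝ)
    (s : NoiseIdx N p2 → ℝ) (c : ℝ) (hs : ∀ b m, s (Sum.inr (Sum.inr (b, m))) = c) :
    let R := embE N p2 + S * embEps N p2 - embEx N β
    ∑ z, (((Ad * R - A * W * (T * embE N p2 + embEps N p2))ᵀ * A + (A * R)ᵀ * Ad) * embEx N v) z z
      * s z
      = -2 * c * (β ⬝ᵥ v) * trace (Aᵀ * Ad) := by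
  intro R
  have hR : ∀ (M : Matrix (Fin N) (Fin N) ℝ) i b m, (M * R) i (Sum.inr (Sum.inr (b, m)))
      = -(M i b * β m) := by
    intro M i b m
    simp [R, Matrix.mul_add, Matrix.mul_sub, ← Matrix.mul_assoc, mul_embE_apply_inr_inr,
      mul_embEps_apply_inr_inr, mul_embEx_apply_inr_inr]
  have hY : ∀ (M : Matrix (Fin N) (Fin N) ℝ) i q,
      (M * (T * embE N p2 + embEps N p2)) i (Sum.inr (Sum.inr q)) = 0 := by
    intro M i q
    simp [Matrix.mul_add, ← Matrix.mul_assoc, mul_embE_apply_inr_inr, mul_embEps_apply_inr_inr]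
  have hK : ∀ b m, ((Ad * R - A * W * (T * embE N p2 + embEps N p2))ᵀ * A + (A * R)ᵀ * Ad)
      (Sum.inr (Sum.inr (b, m))) b = -2 * β m * ∑ i, A i b * Ad i b := by
    intro b m
    rw [Matrix.add_apply, mul_apply, mul_apply, Finset.mul_sum, ← Finset.sum_add_distrib]
    simp only [transpose_apply, Matrix.sub_apply, hR, hY]
    exact Finset.sum_congr rfl fun i _ => by ring
  rw [sum_diag_mul_embEx]
  simp only [hK, hs, trace, mul_apply, transpose_apply, diag_apply, dotProduct, Finset.mul_sum,
    Finset.sum_mul]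
  exact Finset.sum_congr rfl fun b _ => Finset.sum_comm.trans <|
    Finset.sum_congr rfl fun i _ => Finset.sum_congr rfl fun m _ => by ring

end Noise

section Model

variable {N p1 p2 : ℕ} (W : Matrix (Fin N) (Fin N) ℝ) {ρ₀ : ℝ}

lemma trace_transpose_Amat_mul_Adot (ρ : ℝ) :
    trace ((Amat W ρ)ᵀ * Adot W ρ)
      = trace (Smat W ρ * dmat W ρ * dmatDot W ρ * (Smat W ρ)ᵀ)
        - trace (W * (dmat W ρ * dmat W ρ) * (Smat W ρ)ᵀ) := by
  have hd : (dmat W ρ)ᵀ = dmat W ρ := diagonal_transpose _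
  rw [Amat, Adot, transpose_mul, transpose_transpose, hd, Matrix.mul_sub, trace_sub,
    ← trace_transpose (Smat W ρ * dmat W ρ * (dmat W ρ * Wᵀ))]
  simp only [transpose_mul, transpose_transpose, hd, Matrix.mul_assoc]

variable (X : Matrix (Fin N) (Fin p1 ⊕ Fin p2) ℝ) (β₀ : Fin p1 ⊕ Fin p2 → ℝ)
  (e ε' : Fin N → ℝ) (ex : Fin N → Fin p2 → ℝ)

lemma Smat_mulVec_Yobs_sub (hdet : IsUnit (Smat W ρ₀).det) :
    Smat W ρ₀ *ᵥ Yobs W ρ₀ X β₀ e ε' - Xobs X ex *ᵥ β₀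
      = (embE N p2 + Smat W ρ₀ * embEps N p2 - embEx N (β₀ ∘ Sum.inr)) *ᵥ noiseVec e ε' ex := by
  rw [sub_mulVec, add_mulVec, ← mulVec_mulVec, embE_mulVec_noiseVec, embEps_mulVec_noiseVec,
    embEx_mulVec_noiseVec, Yobs, Xobs_mulVec, mulVec_add, mulVec_mulVec, mul_nonsing_inv _ hdet,
    one_mulVec]
  abel

lemma Smat_mulVec_Ytrue_sub (hdet : IsUnit (Smat W ρ₀).det) :
    Smat W ρ₀ *ᵥ Ytrue W ρ₀ X β₀ e - X *ᵥ β₀ = embE N p2 *ᵥ noiseVec e ε' ex := by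
  rw [embE_mulVec_noiseVec, Ytrue, mulVec_mulVec, mul_nonsing_inv _ hdet, one_mulVec,
    add_sub_cancel_left]

lemma Yobs_eq_add_mulVec_noiseVec :
    Yobs W ρ₀ X β₀ e ε'
      = (Smat W ρ₀)⁻¹ *ᵥ (X *ᵥ β₀)
        + ((Smat W ρ₀)⁻¹ * embE N p2 + embEps N p2) *ᵥ noiseVec e ε' ex := by
  rw [add_mulVec, ← mulVec_mulVec, embE_mulVec_noiseVec, embEps_mulVec_noiseVec, Yobs,
    mulVec_add, add_assoc]

lemma Ytrue_eq_add_mulVec_noiseVec :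
    Ytrue W ρ₀ X β₀ e
      = (Smat W ρ₀)⁻¹ *ᵥ (X *ᵥ β₀) + ((Smat W ρ₀)⁻¹ * embE N p2) *ᵥ noiseVec e ε' ex := by
  rw [← mulVec_mulVec, embE_mulVec_noiseVec, Ytrue, mulVec_add]

lemma deriv_deriv_lsObj_obs (hW : ∀ i, W i i = 0) (hdet : IsUnit (Smat W ρ₀).det)
    (w : Fin p1 ⊕ Fin p2 → ℝ) :
    deriv (fun ρ => deriv (fun t : ℝ =>
        lsObj W (Xobs X ex) (Yobs W ρ₀ X β₀ e ε') ρ (β₀ + t • w)) 0) ρ₀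
      = -2 * mixedDerivForm (Amat W ρ₀) (Adot W ρ₀) W
          ((embE N p2 + Smat W ρ₀ * embEps N p2 - embEx N (β₀ ∘ Sum.inr)) *ᵥ noiseVec e ε' ex)
          ((Smat W ρ₀)⁻¹ *ᵥ (X *ᵥ β₀)
            + ((Smat W ρ₀)⁻¹ * embE N p2 + embEps N p2) *ᵥ noiseVec e ε' ex)
          (X *ᵥ w + embEx N (w ∘ Sum.inr) *ᵥ noiseVec e ε' ex) := by
  rw [deriv_deriv_lsObj W hW, Smat_mulVec_Yobs_sub W X β₀ e ε' ex hdet,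
    Yobs_eq_add_mulVec_noiseVec W X β₀ e ε' ex, Xobs_mulVec, embEx_mulVec_noiseVec]

lemma deriv_deriv_lsObj_true (hW : ∀ i, W i i = 0) (hdet : IsUnit (Smat W ρ₀).det)
    (w : Fin p1 ⊕ Fin p2 → ℝ) :
    deriv (fun ρ => deriv (fun t : ℝ =>
        lsObj W X (Ytrue W ρ₀ X β₀ e) ρ (β₀ + t • w)) 0) ρ₀
      = -2 * mixedDerivForm (Amat W ρ₀) (Adot W ρ₀) W
          (embE N p2 *ᵥ noiseVec e ε' ex)
          ((Smat W ρ₀)⁻¹ *ᵥ (X *ᵥ β₀) + ((Smat W ρ₀)⁻¹ * embE N p2) *ᵥ noiseVec e ε' ex)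
          (X *ᵥ w + (0 : Matrix (Fin N) (NoiseIdx N p2) ℝ) *ᵥ noiseVec e ε' ex) := by
  rw [deriv_deriv_lsObj W hW, Smat_mulVec_Ytrue_sub W X β₀ e ε' ex hdet,
    Ytrue_eq_add_mulVec_noiseVec W X β₀ e ε' ex, zero_mulVec, add_zero]

end Model

theorem statement_15_general
    {Ωs : Type*} [MeasurableSpace Ωs] (μ : Measure Ωs) [IsProbabilityMeasure μ]
    (N p1 p2 : ℕ)
    (W : Matrix (Fin N) (Fin N) ℝ) (hW : ∀ i, W i i = 0)
    (X : Matrix (Fin N) (Fin p1 ⊕ Fin p2) ℝ)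
    (ρ0 : ℝ) (β0 : Fin p1 ⊕ Fin p2 → ℝ) (lamx2 : ℝ)
    (hS0 : 0 < (Smat W ρ0).det)
    (E ε : Ωs → Fin N → ℝ) (Ex : Ωs → Fin N → Fin p2 → ℝ)
    (hindep : iIndepFun (noiseFam E ε Ex) μ)
    (hmom : ∀ z, MemLp (noiseFam E ε Ex z) 4 μ)
    (hmean : ∀ z, ∫ ω, noiseFam E ε Ex z ω ∂μ = 0)
    (hExvar : ∀ i j, ∫ ω, (Ex ω i j) ^ 2 ∂μ = lamx2) :
    ∀ j : Fin p1 ⊕ Fin p2,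
      (∫ ω, deriv (fun ρ => deriv (fun t : ℝ =>
            lsObj W (Xobs X (Ex ω)) (Yobs W ρ0 X β0 (E ω) (ε ω)) ρ
              (β0 + t • (Pi.single j 1 : (Fin p1 ⊕ Fin p2) → ℝ))) 0) ρ0 ∂μ)
        - (∫ ω, deriv (fun ρ => deriv (fun t : ℝ =>
            lsObj W X (Ytrue W ρ0 X β0 (E ω)) ρ
              (β0 + t • (Pi.single j 1 : (Fin p1 ⊕ Fin p2) → ℝ))) 0) ρ0 ∂μ)
        = Sum.elim (fun _ => (0 : ℝ))
            (fun k =>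
              4 * lamx2 *
                  Matrix.trace (Smat W ρ0 * dmat W ρ0 * dmatDot W ρ0 * (Smat W ρ0)ᵀ) *
                  β0 (Sum.inr k)
                - 4 * lamx2 *
                    Matrix.trace (W * (dmat W ρ0 * dmat W ρ0) * (Smat W ρ0)ᵀ) *
                    β0 (Sum.inr k)) j
  := by
  intro j
  have hdet : IsUnit (Smat W ρ0).det := hS0.ne'.isUnit
  set ζ : Ωs → NoiseIdx N p2 → ℝ := fun ω => noiseVec (E ω) (ε ω) (Ex ω)
  have hL2 : ∀ z, MemLp (fun ω => ζ ω z) 2 μ := fun z => (hmom z).mono_exponent (by norm_num)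
  have horth : Pairwise fun z z' => ∫ ω, ζ ω z * ζ ω z' ∂μ = 0 := fun z z' h =>
    ((hindep.indepFun h).integral_fun_mul_eq_mul_integral (hL2 z).1 (hL2 z').1).trans
      (by rw [hmean z, zero_mul])
  rw [integral_congr_ae (.of_forall fun ω =>
      deriv_deriv_lsObj_obs W X β0 (E ω) (ε ω) (Ex ω) hW hdet _),
    integral_congr_ae (.of_forall fun ω =>
      deriv_deriv_lsObj_true W X β0 (E ω) (ε ω) (Ex ω) hW hdet _),
    integral_const_mul, integral_const_mul, integral_mixedDerivForm hL2 hmean horth,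
    integral_mixedDerivForm hL2 hmean horth, sum_diag_mul_embEx_obs _ _ _ _ _ _ _ _ lamx2
      fun b m => hExvar b m, trace_transpose_Amat_mul_Adot]
  simp only [Matrix.mul_zero, Matrix.zero_apply, zero_mul, Finset.sum_const_zero, add_zero]
  rcases j with l | k <;> simp [dotProduct, Pi.single_apply]
  ring

theorem statement_15
    {Ωs : Type*} [MeasurableSpace Ωs] (μ : Measure Ωs) [IsProbabilityMeasure μ]
    (N p1 p2 : ℕ) (hN : 0 < N) (hp1 : 0 < p1) (hp2 : 0 < p2)
    (W : Matrix (Fin N) (Fin N) ℝ) (hW : ∀ i, W i i = 0)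
    (X : Matrix (Fin N) (Fin p1 ⊕ Fin p2) ℝ)
    (ρ0 : ℝ) (β0 : Fin p1 ⊕ Fin p2 → ℝ) (σ02 lam2 lamx2 : ℝ)
    (hσ : 0 < σ02) (hlam : 0 < lam2) (hlamx : 0 < lamx2)
    (hS0 : 0 < (Smat W ρ0).det)
    (E ε : Ωs → Fin N → ℝ) (Ex : Ωs → Fin N → Fin p2 → ℝ)
    (hindep : iIndepFun (noiseFam E ε Ex) μ)
    (hmom : ∀ z, MemLp (noiseFam E ε Ex z) 4 μ)
    (hmean : ∀ z, ∫ ω, noiseFam E ε Ex z ω ∂μ = 0)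
    (hEvar : ∀ i, ∫ ω, (E ω i) ^ 2 ∂μ = σ02)
    (hepsvar : ∀ i, ∫ ω, (ε ω i) ^ 2 ∂μ = lam2)
    (hExvar : ∀ i j, ∫ ω, (Ex ω i j) ^ 2 ∂μ = lamx2) :
    ∀ j : Fin p1 ⊕ Fin p2,
      (∫ ω, deriv (fun ρ => deriv (fun t : ℝ =>
            lsObj W (Xobs X (Ex ω)) (Yobs W ρ0 X β0 (E ω) (ε ω)) ρ
              (β0 + t • (Pi.single j 1 : (Fin p1 ⊕ Fin p2) → ℝ))) 0) ρ0 ∂μ)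
        - (∫ ω, deriv (fun ρ => deriv (fun t : ℝ =>
            lsObj W X (Ytrue W ρ0 X β0 (E ω)) ρ
              (β0 + t • (Pi.single j 1 : (Fin p1 ⊕ Fin p2) → ℝ))) 0) ρ0 ∂μ)
        = Sum.elim (fun _ => (0 : ℝ))
            (fun k =>
              4 * lamx2 *
                  Matrix.trace (Smat W ρ0 * dmat W ρ0 * dmatDot W ρ0 * (Smat W ρ0)ᵀ) *
                  β0 (Sum.inr k)
                - 4 * lamx2 *
                    Matrix.trace (W * (dmat W ρ0 * dmat W ρ0) * (Smat W ρ0)ᵀ) *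
                    β0 (Sum.inr k)) j :=
  statement_15_general μ N p1 p2 W hW X ρ0 β0 lamx2 hS0 E ε Ex hindep hmom hmean hExvar

end PSAR
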